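/- arXiv:1810.12542 — 4 statements merged into one kernel-verified Lean document; each statement's English description precedes it below -/
import Mathlib

section
/- Let (P, ≤) be a partial order and let Q = P^ω be the finite-support product: elements are functions p : ℕ → P with p(k) equal to the greatest element 1 of P for all but finitely many k, ordered coordinatewise. Then for any p, q ∈ Q there is an order automorphism h of Q (induced by a permutation of ℕ) such that p and h(q) are compatible. -/
/-!
Choose `N` exceeding every coordinate in the supports of `p` and `q`, and let `π` swap the blocks
`[0, N)` and `[N, 2N)`. Then `π` moves the support of `q` into `[N, 2N)`, away from the support
of `p`; two elements of `P^ω` with disjoint supports have a common lower bound, namely `p` on its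
support and `h q` elsewhere.
-/

open Set

/-- The finite-support power `P^ω`: functions `ℕ → P` equal to the greatest
element `⊤` outside a finite set, ordered coordinatewise. -/
abbrev FinSupp (P : Type*) [PartialOrder P] [OrderTop P] :=
  {x : ℕ → P // {k | x k ≠ ⊤}.Finite}

section

variable {P : Type*} [PartialOrder P] [OrderTop P]

def permIso (π : Equiv.Perm ℕ) : FinSupp P ≃o FinSupp P where
  toFun x := ⟨fun k => x.1 (π.symm k), x.2.preimage π.symm.injective.injOn⟩
  invFun x := ⟨fun k => x.1 (π k), x.2.preimage π.injective.injOn⟩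
  left_inv x := by ext k; simp
  right_inv x := by ext k; simp
  map_rel_iff' {x y} := ⟨fun h k => by simpa using h (π k), fun h k => h (π.symm k)⟩

theorem exists_le_le_of_disjoint {x y : FinSupp P}
    (h : Disjoint {k | x.1 k ≠ ⊤} {k | y.1 k ≠ ⊤}) :
    ∃ r : FinSupp P, r ≤ x ∧ r ≤ y := by
  classical
  refine ⟨⟨fun k => if x.1 k = ⊤ then y.1 k else x.1 k,
    (x.2.union y.2).subset fun k hk => ?_⟩, fun k => ?_, fun k => ?_⟩
  · by_cases hx : x.1 k = ⊤
    · exact Or.inr (by simpa [hx] using hk)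
    · exact Or.inl hx
  · by_cases hx : x.1 k = ⊤ <;> simp [hx]
  · by_cases hx : x.1 k = ⊤
    · simp [hx]
    · have hy : y.1 k = ⊤ := not_not.mp fun hy => h.ne_of_mem hx hy rfl
      simp [hx, hy]

end

def blockSwap (N : ℕ) : Equiv.Perm ℕ :=
  Function.Involutive.toPerm (fun k => if k < N then k + N else if k < 2 * N then k - N else k)
    fun k => by dsimp only; split_ifs <;> omega

theorem blockSwap_symm_of_lt {N k : ℕ} (hk : k < N) : (blockSwap N).symm k = k + N :=
  if_pos hk

theorem disjoint_preimage_blockSwap_symm {S T : Set ℕ} {N : ℕ} (hS : S ⊆ Iio N)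
    (hT : T ⊆ Iio N) : Disjoint S ((blockSwap N).symm ⁻¹' T) := by
  refine Set.disjoint_left.mpr fun k hkS hkT => ?_
  have hkN : (blockSwap N).symm k < N := hT hkT
  rw [blockSwap_symm_of_lt (hS hkS)] at hkN
  omega

/-- Homogeneity of the finite-support product `P^ω`: for any `p, q` there is an
order automorphism `h` of `P^ω`, induced by a permutation of `ℕ`, such that `p`
and `h q` are compatible. -/
theorem stmt_13 {P : Type*} [PartialOrder P] [OrderTop P] (p q : FinSupp P) :
    ∃ π : Equiv.Perm ℕ, ∃ h : FinSupp P ≃o FinSupp P,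
      (∀ x : FinSupp P, ∀ k : ℕ, (h x).1 k = x.1 (π.symm k)) ∧
      ∃ r : FinSupp P, r ≤ p ∧ r ≤ h q := by
  obtain ⟨M, hM⟩ := (p.2.union q.2).bddAbove
  have hsupp : {k | p.1 k ≠ ⊤} ∪ {k | q.1 k ≠ ⊤} ⊆ Iio (M + 1) :=
    fun k hk => Nat.lt_succ_of_le (hM hk)
  refine ⟨blockSwap (M + 1), permIso (blockSwap (M + 1)), fun _ _ => rfl,
    exists_le_le_of_disjoint ?_⟩
  exact disjoint_preimage_blockSwap_symm (subset_union_left.trans hsupp)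
    (subset_union_right.trans hsupp)
end

section
/- Finite-support products of countable posets are ccc: if (P_i)_{i ∈ I} is a family of countable partial orders each with a greatest element 1_i, then the finite-support product P (elements p with p(i) = 1_i for all but finitely many i, ordered coordinatewise) satisfies the countable chain condition. -/
/-!
Δ-system argument. An uncountable antichain has uncountably many members whose supports form a
Δ-system with a finite root `R`; as `∀ i : R, P i` is countable, two distinct members agree on
`R`, hence on the intersection of their supports, and the coordinatewise glueing of the two is a
common lower bound.
-/

open Set

section DeltaSystem

variable {ι α : Type*}

theorem Set.exists_maximal_pairwiseDisjoint {β : Type*} [PartialOrder β] [OrderBot β]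
    (f : ι → β) (s : Set ι) : ∃ t, Maximal (fun t => t ⊆ s ∧ t.PairwiseDisjoint f) t :=
  zorn_subset _ fun c hcs hc =>
    ⟨⋃₀ c, ⟨sUnion_subset fun _ ht => (hcs ht).1,
      (hc.pairwiseDisjoint_sUnion f).2 fun _ ht => (hcs ht).2⟩,
      fun _ => subset_sUnion_of_mem⟩

/-- A maximal disjoint subfamily meets every other member, so were it countable, it would cover `s`
by countably many countable sets. -/
theorem exists_uncountable_pairwiseDisjoint_of_countable_setOf_mem (f : ι → Finset α)
    {s : Set ι} (hs : ¬ s.Countable) (hf : ∀ x, {i ∈ s | x ∈ f i}.Countable) :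
    ∃ t ⊆ s, ¬ t.Countable ∧ t.PairwiseDisjoint f := by
  obtain ⟨t, ht⟩ := Set.exists_maximal_pairwiseDisjoint f s
  refine ⟨t, ht.prop.1, fun htc => hs ?_, ht.prop.2⟩
  have hcover : s ⊆ t ∪ ⋃ x ∈ ⋃ j ∈ t, (f j : Set α), {i ∈ s | x ∈ f i} := by
    intro i hi
    by_cases hit : i ∈ t
    · exact Or.inl hit
    obtain ⟨j, hjt, hij⟩ : ∃ j ∈ t, ¬ Disjoint (f i) (f j) := by
      by_contra! hdisj
      exact hit (ht.mem_of_prop_insert ⟨insert_subset hi ht.prop.1,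
        ht.prop.2.insert fun j hjt _ => hdisj j hjt⟩)
    obtain ⟨x, hxi, hxj⟩ := Finset.not_disjoint_iff.1 hij
    exact Or.inr (mem_biUnion (mem_biUnion hjt hxj) ⟨hi, hxi⟩)
  exact (htc.union ((htc.biUnion fun j _ => (f j).countable_toSet).biUnion
    fun x _ => hf x)).mono hcover

/-- If some point lies in uncountably many `f i`, delete it from them and recurse; otherwise a
disjoint subfamily is uncountable. -/
theorem exists_uncountable_pairwise_inter_eq_of_card_le [DecidableEq α] (n : ℕ) (f : ι → Finset α)
    {s : Set ι} (hcard : ∀ i ∈ s, (f i).card ≤ n) (hs : ¬ s.Countable) :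
    ∃ t ⊆ s, ¬ t.Countable ∧ ∃ R, t.Pairwise fun i j => f i ∩ f j = R := by
  induction n generalizing f s with
  | zero =>
    refine ⟨s, subset_rfl, hs, ∅, fun i hi j _ _ => ?_⟩
    simp only [Finset.card_eq_zero.1 (Nat.le_zero.1 (hcard i hi)), Finset.empty_inter]
  | succ n ih =>
    by_cases hx : ∃ x, ¬ {i ∈ s | x ∈ f i}.Countable
    · obtain ⟨x, hx⟩ := hx
      obtain ⟨t, hts, ht, R, hR⟩ := ih (fun i => (f i).erase x) (s := {i ∈ s | x ∈ f i})
        (fun i hi => by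
          rw [Finset.card_erase_of_mem hi.2]
          exact Nat.sub_le_of_le_add (hcard i hi.1))
        hx
      refine ⟨t, fun i hi => (hts hi).1, ht, insert x R, fun i hi j hj hij => ?_⟩
      rw [← hR hi hj hij, Finset.erase_inter, Finset.inter_erase, Finset.erase_idem,
        Finset.insert_erase]
      exact Finset.mem_inter.2 ⟨(hts hi).2, (hts hj).2⟩
    · push Not at hx
      obtain ⟨t, hts, ht, hdisj⟩ :=
        exists_uncountable_pairwiseDisjoint_of_countable_setOf_mem f hs hx
      exact ⟨t, hts, ht, ∅, fun i hi j hj hij =>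
        Finset.disjoint_iff_inter_eq_empty.1 (hdisj hi hj hij)⟩

theorem exists_uncountable_pairwise_inter_eq [DecidableEq α] (f : ι → Finset α) {s : Set ι}
    (hs : ¬ s.Countable) : ∃ t ⊆ s, ¬ t.Countable ∧ ∃ R, t.Pairwise fun i j => f i ∩ f j = R := by
  obtain ⟨n, hn⟩ : ∃ n, ¬ {i ∈ s | (f i).card = n}.Countable := by
    by_contra! h
    have hcover : s ⊆ ⋃ n, {i ∈ s | (f i).card = n} := fun i hi => mem_iUnion.2 ⟨_, hi, rfl⟩
    exact hs ((countable_iUnion h).mono hcover)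
  obtain ⟨t, hts, ht, hR⟩ :=
    exists_uncountable_pairwise_inter_eq_of_card_le n f (fun i hi => hi.2.le) hn
  exact ⟨t, fun i hi => (hts hi).1, ht, hR⟩

end DeltaSystem

section FiniteSupportProduct

variable {I : Type*} {P : I → Type*} [∀ i, PartialOrder (P i)] [∀ i, OrderTop (P i)]

theorem exists_le_le_of_eq_of_ne_top (p q : {p : ∀ i, P i // {i | p i ≠ ⊤}.Finite})
    (h : ∀ i, p.1 i ≠ ⊤ → q.1 i ≠ ⊤ → p.1 i = q.1 i) :
    ∃ r : {p : ∀ i, P i // {i | p i ≠ ⊤}.Finite}, r ≤ p ∧ r ≤ q := by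
  classical
  refine ⟨⟨fun i => if p.1 i = ⊤ then q.1 i else p.1 i, (p.2.union q.2).subset fun i hi => ?_⟩,
    fun i => ?_, fun i => ?_⟩
  · by_cases hp : p.1 i = ⊤
    · simp_all
    · exact Or.inl hp
  · by_cases hp : p.1 i = ⊤ <;> simp [hp]
  · by_cases hp : p.1 i = ⊤
    · simp [hp]
    · by_cases hq : q.1 i = ⊤
      · simp [hq]
      · simp [h i hp hq]

end FiniteSupportProduct

/-- Finite-support products of countable posets (each with a greatest element)
satisfy the countable chain condition: every antichain is countable. -/
theorem stmt_15 {I : Type*} {P : I → Type*} [∀ i, PartialOrder (P i)]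
    [∀ i, OrderTop (P i)] [∀ i, Countable (P i)]
    (A : Set {p : ∀ i, P i // {i | p i ≠ ⊤}.Finite})
    (anti : ∀ p ∈ A, ∀ q ∈ A, p ≠ q →
      ¬∃ r : {p : ∀ i, P i // {i | p i ≠ ⊤}.Finite}, r ≤ p ∧ r ≤ q) :
    A.Countable := by
  classical
  by_contra hA
  obtain ⟨t, htA, ht, R, hR⟩ := exists_uncountable_pairwise_inter_eq (fun p => p.2.toFinset) hA
  obtain ⟨p, hp, q, hq, hpq, hagree⟩ : ∃ p ∈ t, ∃ q ∈ t, p ≠ q ∧ ∀ i ∈ R, p.1 i = q.1 i := by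
    by_contra! h
    refine ht ((mapsTo_univ (fun p (i : R) => p.1 i.1) t).countable_of_injOn
      (fun p hp q hq hpq => ?_) countable_univ)
    by_contra hne
    obtain ⟨i, hi⟩ := h p hp q hq hne
    exact hi.2 (congrFun hpq ⟨i, hi.1⟩)
  refine anti p (htA hp) q (htA hq) hpq (exists_le_le_of_eq_of_ne_top p q fun i hpi hqi => ?_)
  refine hagree i ?_
  rw [← hR hp hq hpq]
  simpa using ⟨hpi, hqi⟩
end

section
/- Δ-system lemma: every uncountable family of finite sets contains an uncountable subfamily forming a Δ-system, i.e., there is a finite set R (the root) such that any two distinct members of the subfamily intersect exactly in R. -/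
/-!
Only countably many sizes occur, so some size class `n` is uncountable; induct on `n`.
If a point `x` lies in uncountably many members, delete `x` from them, apply the induction
hypothesis, and put `x` back into the root. Otherwise take a maximal pairwise disjoint
subfamily `ℬ`: by maximality every member meets `⋃ ℬ`, so if `ℬ` were countable the whole
family would be a countable union of countable families.
-/

open Set

theorem Set.exists_not_countable_inter_preimage_singleton {α β : Type*} [Countable β]
    (f : α → β) {s : Set α} (hs : ¬s.Countable) : ∃ b, ¬(s ∩ f ⁻¹' {b}).Countable := by
  by_contra! h
  exact hs <| (countable_iUnion h).mono fun a ha => by simp [ha]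

theorem exists_maximal_pairwiseDisjoint_subset {ι β : Type*} [PartialOrder β] [OrderBot β]
    (f : ι → β) (s : Set ι) : ∃ t, Maximal (fun t => t ⊆ s ∧ t.PairwiseDisjoint f) t :=
  zorn_subset _ fun c hcS hc =>
    ⟨⋃₀ c, ⟨sUnion_subset fun _ ht => (hcS ht).1,
      (hc.pairwiseDisjoint_sUnion f).2 fun _ ht => (hcS ht).2⟩, fun _ => subset_sUnion_of_mem⟩

theorem exists_uncountable_pairwiseDisjoint {α : Type*} {𝒜 : Set (Finset α)}
    (h𝒜 : ¬𝒜.Countable) (hx : ∀ x, {A ∈ 𝒜 | x ∈ A}.Countable) :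
    ∃ ℬ ⊆ 𝒜, ¬ℬ.Countable ∧ ℬ.PairwiseDisjoint id := by
  obtain ⟨ℬ, hℬ⟩ := exists_maximal_pairwiseDisjoint_subset id 𝒜
  refine ⟨ℬ, hℬ.prop.1, fun hℬc => h𝒜 ?_, hℬ.prop.2⟩
  have hcover : 𝒜 ⊆ ℬ ∪ ⋃ x ∈ ⋃ B ∈ ℬ, (B : Set α), {A ∈ 𝒜 | x ∈ A} := by
    intro A hA
    by_cases hAℬ : A ∈ ℬ
    · exact Or.inl hAℬ
    obtain ⟨B, hB, hAB⟩ : ∃ B ∈ ℬ, ¬Disjoint A B := by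
      by_contra! hdisj
      exact hAℬ (hℬ.mem_of_prop_insert ⟨insert_subset hA hℬ.prop.1,
        hℬ.prop.2.insert fun B hB _ => hdisj B hB⟩)
    obtain ⟨x, hxA, hxB⟩ := Finset.not_disjoint_iff.1 hAB
    exact Or.inr (mem_biUnion (mem_biUnion hB hxB) ⟨hA, hxA⟩)
  have hT : (⋃ B ∈ ℬ, (B : Set α)).Countable := hℬc.biUnion fun B _ => B.countable_toSet
  exact (hℬc.union (hT.biUnion fun x _ => hx x)).mono hcover

section

variable {α : Type*} [DecidableEq α]

def IsDeltaSystem (ℬ : Set (Finset α)) (R : Finset α) : Prop :=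
  ∀ A ∈ ℬ, ∀ B ∈ ℬ, A ≠ B → A ∩ B = R

theorem isDeltaSystem_empty_iff {ℬ : Set (Finset α)} :
    IsDeltaSystem ℬ ∅ ↔ ℬ.PairwiseDisjoint id := by
  simp only [IsDeltaSystem, PairwiseDisjoint, Set.Pairwise, Function.onFun, id,
    Finset.disjoint_iff_inter_eq_empty]

theorem IsDeltaSystem.of_image_erase {ℬ : Set (Finset α)} {R : Finset α} {x : α}
    (hx : ∀ A ∈ ℬ, x ∈ A) (h : IsDeltaSystem ((·.erase x) '' ℬ) R) :
    IsDeltaSystem ℬ (insert x R) := by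
  intro A hA B hB hAB
  have hne : A.erase x ≠ B.erase x := fun he =>
    hAB (Finset.erase_injOn' x (hx A hA) (hx B hB) he)
  rw [← h _ (mem_image_of_mem _ hA) _ (mem_image_of_mem _ hB) hne, Finset.erase_inter,
    Finset.inter_erase, Finset.erase_idem,
    Finset.insert_erase (Finset.mem_inter.2 ⟨hx A hA, hx B hB⟩)]

theorem exists_uncountable_isDeltaSystem_of_card_eq (n : ℕ) {𝒜 : Set (Finset α)}
    (hcard : ∀ A ∈ 𝒜, A.card = n) (h𝒜 : ¬𝒜.Countable) :
    ∃ R, ∃ ℬ ⊆ 𝒜, ¬ℬ.Countable ∧ IsDeltaSystem ℬ R := by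
  induction n generalizing 𝒜 with
  | zero =>
    refine absurd ((countable_singleton ∅).mono fun A hA => ?_) h𝒜
    exact Finset.card_eq_zero.1 (hcard A hA)
  | succ n ih =>
    by_cases hx : ∀ x, {A ∈ 𝒜 | x ∈ A}.Countable
    · obtain ⟨ℬ, hℬ𝒜, hℬ, hdisj⟩ := exists_uncountable_pairwiseDisjoint h𝒜 hx
      exact ⟨∅, ℬ, hℬ𝒜, hℬ, isDeltaSystem_empty_iff.2 hdisj⟩
    obtain ⟨x, hx⟩ := not_forall.1 hx
    set 𝒜ₓ := {A ∈ 𝒜 | x ∈ A}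
    have herase : InjOn (·.erase x) 𝒜ₓ := fun A hA B hB => Finset.erase_injOn' x hA.2 hB.2
    obtain ⟨R, ℬ', hℬ'𝒜, hℬ', hℬ'R⟩ := ih (𝒜 := (·.erase x) '' 𝒜ₓ)
      (by rintro _ ⟨A, hA, rfl⟩; rw [Finset.card_erase_of_mem hA.2, hcard A hA.1]; rfl)
      fun hc => hx ((mapsTo_image _ _).countable_of_injOn herase hc)
    set ℬ := 𝒜ₓ ∩ (·.erase x) ⁻¹' ℬ'
    have hℬℬ' : (·.erase x) '' ℬ = ℬ' := by
      rw [image_inter_preimage, inter_eq_right.2 hℬ'𝒜]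
    refine ⟨insert x R, ℬ, fun A hA => hA.1.1, fun hc => hℬ' (hℬℬ' ▸ hc.image _), ?_⟩
    exact IsDeltaSystem.of_image_erase (fun A hA => hA.1.2) (hℬℬ' ▸ hℬ'R)

end

/-- Δ-system lemma: every uncountable family of finite sets contains an uncountable
subfamily forming a Δ-system, i.e. there is a finite root `R` such that any two
distinct members of the subfamily intersect exactly in `R`. -/
theorem stmt_16 {α : Type*} [DecidableEq α] (𝒜 : Set (Finset α)) (h : ¬𝒜.Countable) :
    ∃ R : Finset α, ∃ ℬ ⊆ 𝒜, ¬ℬ.Countable ∧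
      ∀ A ∈ ℬ, ∀ B ∈ ℬ, A ≠ B → A ∩ B = R := by
  obtain ⟨n, hn⟩ := exists_not_countable_inter_preimage_singleton Finset.card h
  obtain ⟨R, ℬ, hℬ𝒜, hℬ, hR⟩ :=
    exists_uncountable_isDeltaSystem_of_card_eq n (fun A hA => hA.2) hn
  exact ⟨R, ℬ, hℬ𝒜.trans inter_subset_left, hℬ, hR⟩
end

section
/- Let W : ω₁ + 1 → Set(Q) be an increasing (α ≤ β → W_α ⊆ W_β) family of subsets of a ccc partial order Q such that: (i) W_λ = ⋃_{α<λ} W_α for limit λ; (ii) each W_α is downward closed (q ≤ p ∈ W_α → q ∈ W_α); and (iii) p ∈ W_{α+1} whenever there is a dense set D ⊆ Q such that every q ∈ D with q ≤ p belongs to W_α. Then the construction stabilizes at ω₁: W_{ω₁+1} = W_{ω₁}, where W_{ω₁+1} is defined from W_{ω₁} by rule (iii). -/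
/-!
Shrink the dense set `D` witnessing `p ∈ W_{ω₁+1}` to conditions that either extend `p` or are
incompatible with it, and pick a maximal antichain `A` in it. By the ccc, `A` is countable, so the
members of `A` below `p`, all of which lie in `W_{ω₁} = ⋃_{α<ω₁} W_α`, already lie in a single
`W_α` with `α < ω₁`. The set of extensions of members of `A` is dense, and each of its elements
below `p` extends a member of `A` below `p`, so rule (iii) puts `p` into `W_{α+1} ⊆ W_{ω₁}`.
-/

open Cardinal Ordinal Order Set

theorem MonotoneOn.exists_lt_omega_one_subset {Q : Type*} {W : Ordinal → Set Q}
    (hW : MonotoneOn W (Iio ω₁)) {S : Set Q} (hS : S.Countable)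
    (hSW : S ⊆ ⋃ α ∈ Iio ω₁, W α) : ∃ α < ω₁, S ⊆ W α := by
  have hstage : ∀ a : S, ∃ α < ω₁, (a : Q) ∈ W α := fun a => by
    simpa using hSW a.2
  choose f hf_lt hf_mem using hstage
  have : Countable S := hS.to_subtype
  have hsup : ⨆ a, f a < ω₁ := iSup_lt_omega_one hf_lt
  exact ⟨⨆ a, f a, hsup, fun a ha =>
    hW (hf_lt ⟨a, ha⟩) hsup (Ordinal.le_iSup f ⟨a, ha⟩) (hf_mem ⟨a, ha⟩)⟩

namespace Forcing

variable {Q : Type*} [Preorder Q]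

def Compatible (p q : Q) : Prop := ∃ r, r ≤ p ∧ r ≤ q

theorem Compatible.symm {p q : Q} : Compatible p q → Compatible q p
  | ⟨r, hrp, hrq⟩ => ⟨r, hrq, hrp⟩

def IsDense (D : Set Q) : Prop := ∀ r, ∃ q ∈ D, q ≤ r

theorem IsDense.sep_le_or_not_compatible {D : Set Q} (hD : IsDense D) (p : Q) :
    IsDense {q ∈ D | q ≤ p ∨ ¬Compatible q p} := by
  intro r
  by_cases hrp : Compatible r p
  · obtain ⟨s, hsr, hsp⟩ := hrp
    obtain ⟨q, hqD, hqs⟩ := hD s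
    exact ⟨q, ⟨hqD, Or.inl (hqs.trans hsp)⟩, hqs.trans hsr⟩
  · obtain ⟨q, hqD, hqr⟩ := hD r
    refine ⟨q, ⟨hqD, Or.inr ?_⟩, hqr⟩
    rintro ⟨s, hsq, hsp⟩
    exact hrp ⟨s, hsq.trans hqr, hsp⟩

theorem exists_antichain_subset_forall_compatible (D : Set Q) :
    ∃ A ⊆ D, IsAntichain Compatible A ∧ ∀ q ∈ D, ∃ a ∈ A, Compatible q a := by
  obtain ⟨A, ⟨hAD, hA⟩, hmax⟩ := zorn_subset {A | A ⊆ D ∧ IsAntichain Compatible A}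
    fun c hc hchain => ⟨⋃₀ c, ⟨sUnion_subset fun s hs => (hc hs).1,
      (pairwise_sUnion hchain.directedOn).2 fun s hs => (hc hs).2⟩,
      fun _ => subset_sUnion_of_mem⟩
  refine ⟨A, hAD, hA, fun q hq => ?_⟩
  by_contra! hincompat
  have hinsert : IsAntichain Compatible (insert q A) :=
    hA.insert (fun b hb _ hbq => hincompat b hb hbq.symm) fun b hb _ => hincompat b hb
  have hqA : q ∈ A := hmax ⟨insert_subset hq hAD, hinsert⟩ (subset_insert q A) (mem_insert q A)
  exact hincompat q hqA ⟨q, le_rfl, le_rfl⟩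

theorem isDense_lowerClosure {D A : Set Q} (hD : IsDense D)
    (hA : ∀ q ∈ D, ∃ a ∈ A, Compatible q a) : IsDense (lowerClosure A : Set Q) := by
  intro r
  obtain ⟨q, hqD, hqr⟩ := hD r
  obtain ⟨a, ha, s, hsq, hsa⟩ := hA q hqD
  exact ⟨s, ⟨a, ha, hsa⟩, hsq.trans hqr⟩

theorem IsDense.exists_antichain_subset_isDense_lowerClosure {D : Set Q} (hD : IsDense D) :
    ∃ A ⊆ D, IsAntichain Compatible A ∧ IsDense (lowerClosure A : Set Q) :=
  let ⟨A, hAD, hA, hAmax⟩ := exists_antichain_subset_forall_compatible D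
  ⟨A, hAD, hA, isDense_lowerClosure hD hAmax⟩

end Forcing

open Forcing in
/-- Stabilization at `ω₁` of the Solovay construction over a ccc poset `Q`:
if `W` is increasing up to `ω₁`, continuous at limits, downward closed, and
satisfies the successor rule (iii), then applying rule (iii) once more to
`W_{ω₁}` yields nothing new: `W_{ω₁+1} = W_{ω₁}`. -/
theorem stmt_17 {Q : Type*} [PartialOrder Q]
    (ccc : ∀ A : Set Q, (∀ p ∈ A, ∀ q ∈ A, p ≠ q → ¬∃ r, r ≤ p ∧ r ≤ q) → A.Countable)
    (W : Ordinal → Set Q)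
    (hmono : ∀ α β : Ordinal, α ≤ β → β ≤ (aleph 1).ord → W α ⊆ W β)
    (hlim : ∀ l : Ordinal, l ≤ (aleph 1).ord → Order.IsSuccLimit l → W l = ⋃ α ∈ Set.Iio l, W α)
    (hdown : ∀ α : Ordinal, α ≤ (aleph 1).ord → ∀ p ∈ W α, ∀ q : Q, q ≤ p → q ∈ W α)
    (hsucc : ∀ α : Ordinal, α + 1 ≤ (aleph 1).ord → ∀ p : Q,
      (∃ D : Set Q, (∀ r : Q, ∃ q ∈ D, q ≤ r) ∧ ∀ q ∈ D, q ≤ p → q ∈ W α) →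
      p ∈ W (α + 1)) :
    ∀ p : Q,
      (∃ D : Set Q, (∀ r : Q, ∃ q ∈ D, q ≤ r) ∧ ∀ q ∈ D, q ≤ p → q ∈ W ((aleph 1).ord)) →
      p ∈ W ((aleph 1).ord) := by
  intro p ⟨D, hD, hDW⟩
  obtain ⟨A, hAD, hA, hAdense⟩ :=
    (IsDense.sep_le_or_not_compatible hD p).exists_antichain_subset_isDense_lowerClosure
  have hω₁ : (aleph 1).ord = ω₁ := ord_aleph 1
  have hbelow : {a ∈ A | a ≤ p} ⊆ ⋃ α ∈ Iio ω₁, W α := by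
    rw [← hω₁, ← hlim _ le_rfl (isSuccLimit_ord (aleph0_le_aleph 1))]
    exact fun a ⟨ha, hap⟩ => hDW a (hAD ha).1 hap
  have hWmono : MonotoneOn W (Iio ω₁) := fun α _ β hβ hαβ =>
    hmono α β hαβ (hω₁ ▸ le_of_lt hβ)
  obtain ⟨α, hα, hαW⟩ := hWmono.exists_lt_omega_one_subset ((ccc A hA).mono (sep_subset _ _)) hbelow
  have hα1 : α + 1 ≤ (aleph 1).ord := hω₁ ▸ (isSuccLimit_omega 1).add_one_lt hα |>.le
  refine hmono _ _ hα1 le_rfl (hsucc α hα1 p ⟨lowerClosure A, hAdense, ?_⟩)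
  rintro q ⟨a, ha, hqa⟩ hqp
  have hap : a ≤ p := (hAD ha).2.resolve_right fun hap => hap ⟨q, hqa, hqp⟩
  exact hdown α (hω₁ ▸ hα.le) a (hαW ⟨ha, hap⟩) q hqa
end
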